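/- Let (A, C, ρ) be a binomial system of degree d in n indeterminates over a field K, and suppose ρ_{m(ρ)} > 0 where m(ρ) = max{i : ρ_i ≠ 0}. Then the set X^A ∪ {X^c − X^{c+ρ} : c ∈ C} is a Gröbner basis of the ideal F(A,C,ρ) = (X^A ∪ {X^c − X^{c+ρ} : c ∈ C}) with respect to the reverse lexicographic order; in particular in_rlex F(A,C,ρ) = (X^{A∪C}). -/

import Mathlib

open MvPolynomial

namespace Fumasoli

/-- The `i`-th standard basis exponent vector `e_i`. -/
def stdExp (ν : ℕ) (i : Fin ν) : Fin ν → ℕ := fun k => if k = i then 1 else 0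

/-- The Borel order: `a ≥_Bor b` iff `a - b` is a nonnegative integer combination of the
vectors `e_j - e_{j+1}` for `1 ≤ j < ν`.  Here `α` records the coefficients, with
`α 0 = 0` and `α j = 0` for `j ≥ ν`, and component `i` (0-indexed) of `a - b` equals
`α (i+1) - α i`. -/
def BorelGE {ν : ℕ} (a b : Fin ν → ℕ) : Prop :=
  ∃ α : ℕ → ℕ, α 0 = 0 ∧ (∀ j, ν ≤ j → α j = 0) ∧
    ∀ i : Fin ν, (a i : ℤ) - (b i : ℤ) = (α (i.val + 1) : ℤ) - (α i.val : ℤ)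

/-- `M` is an upper triangular matrix of nonnegative integers with row sums `a` and
column sums `b`, i.e. `M ∈ U(a,b)`. -/
def IsTransferMatrix {ν : ℕ} (M : Matrix (Fin ν) (Fin ν) ℕ) (a b : Fin ν → ℕ) : Prop :=
  (∀ i j : Fin ν, (j : ℕ) < (i : ℕ) → M i j = 0) ∧
  (∀ j, ∑ i, M i j = b j) ∧ (∀ i, ∑ j, M i j = a i)

/-- Integer-matrix version of `IsTransferMatrix`, with integer row and column sums. -/
def IsTransferMatrixZ {ν : ℕ} (M : Matrix (Fin ν) (Fin ν) ℤ) (a b : Fin ν → ℤ) : Prop :=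
  (∀ i j : Fin ν, (j : ℕ) < (i : ℕ) → M i j = 0) ∧ (∀ i j : Fin ν, 0 ≤ M i j) ∧
  (∀ j, ∑ i, M i j = b j) ∧ (∀ i, ∑ j, M i j = a i)

/-- `m(ρ)`: the largest (1-indexed) position where `ρ` is nonzero, or `1` if `ρ = 0`. -/
def mIdx {ν : ℕ} (ρ : Fin ν → ℤ) : ℕ :=
  max 1 ((Finset.univ.filter fun i => ρ i ≠ 0).sup fun i => (i : ℕ) + 1)

/-- `ρ_{m(ρ)} > 0`, expressed via the (1-indexed) position `m(ρ)`. -/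
def mPos {ν : ℕ} (ρ : Fin ν → ℤ) : Prop :=
  ∃ i : Fin ν, (i : ℕ) + 1 = mIdx ρ ∧ 0 < ρ i

/-- A term order on exponent vectors: a translation-invariant strict linear order. -/
structure TermOrder (ν : ℕ) where
  lt : (Fin ν → ℕ) → (Fin ν → ℕ) → Prop
  irrefl : ∀ a, ¬ lt a a
  trans : ∀ a b c, lt a b → lt b c → lt a c
  total : ∀ a b, lt a b ∨ a = b ∨ lt b a
  add_right : ∀ a b c, lt a b → lt (a + c) (b + c)

/-- Admissibility of a term order: `X_1 > X_2 > ⋯ > X_ν` and it refines total degree. -/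
def TermOrder.IsAdmissible {ν : ℕ} (τ : TermOrder ν) : Prop :=
  (∀ i j : Fin ν, i < j → τ.lt (stdExp ν j) (stdExp ν i)) ∧
  (∀ a b : Fin ν → ℕ, (∑ i, a i) < (∑ i, b i) → τ.lt a b)

/-- The (degree) reverse lexicographic order: `a < b` iff `deg a < deg b`, or the degrees
agree and the last position where `a` and `b` differ has `a` strictly bigger there. -/
def rlexLT {ν : ℕ} (a b : Fin ν → ℕ) : Prop :=
  (∑ i, a i) < (∑ i, b i) ∨
  ((∑ i, a i) = (∑ i, b i) ∧ ∃ k : Fin ν, b k < a k ∧ ∀ j : Fin ν, k < j → a j = b j)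

/-- Exponent vector as a finitely supported function. -/
noncomputable def expF {ν : ℕ} (a : Fin ν → ℕ) : Fin ν →₀ ℕ := Finsupp.equivFunOnFinite.symm a

/-- The monomial `X^a`. -/
noncomputable def mono (K : Type*) [CommSemiring K] {ν : ℕ} (a : Fin ν → ℕ) :
    MvPolynomial (Fin ν) K := monomial (expF a) 1

/-- `m` is the leading monomial (w.r.t. the strict order `lt`) of `f`. -/
def IsLeadOf {K : Type*} [CommSemiring K] {ν : ℕ}
    (lt : (Fin ν → ℕ) → (Fin ν → ℕ) → Prop)
    (f : MvPolynomial (Fin ν) K) (m : Fin ν →₀ ℕ) : Prop :=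
  m ∈ f.support ∧ ∀ m' ∈ f.support, m' ≠ m → lt (⇑m') (⇑m)

/-- The initial ideal of `I` w.r.t. the strict order `lt`: generated by the leading
monomials of the nonzero elements of `I`. -/
noncomputable def initialIdeal {K : Type*} [CommSemiring K] {ν : ℕ}
    (lt : (Fin ν → ℕ) → (Fin ν → ℕ) → Prop)
    (I : Ideal (MvPolynomial (Fin ν) K)) : Ideal (MvPolynomial (Fin ν) K) :=
  Ideal.span {p | ∃ f ∈ I, f ≠ 0 ∧ ∃ m, IsLeadOf lt f m ∧ p = monomial m (1 : K)}

/-- `G` is a Gröbner basis of `I` w.r.t. `lt`: the elements of `G` lie in `I` and their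
leading monomials generate the initial ideal of `I`. -/
noncomputable def IsGroebnerBasis {K : Type*} [CommSemiring K] {ν : ℕ}
    (lt : (Fin ν → ℕ) → (Fin ν → ℕ) → Prop)
    (G : Set (MvPolynomial (Fin ν) K)) (I : Ideal (MvPolynomial (Fin ν) K)) : Prop :=
  (∀ g ∈ G, g ∈ I) ∧
    initialIdeal lt I =
      Ideal.span {p | ∃ g ∈ G, g ≠ 0 ∧ ∃ m, IsLeadOf lt g m ∧ p = monomial m (1 : K)}

/-- The irrelevant maximal ideal `(X_1, …, X_ν)`. -/
noncomputable def irrelIdeal (K : Type*) [CommSemiring K] (ν : ℕ) :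
    Ideal (MvPolynomial (Fin ν) K) := Ideal.span (Set.range X)

/-- Saturation of `I` with respect to the irrelevant maximal ideal. -/
noncomputable def satIdeal {K : Type*} [CommRing K] {ν : ℕ}
    (I : Ideal (MvPolynomial (Fin ν) K)) : Ideal (MvPolynomial (Fin ν) K) :=
  ⨆ k : ℕ, Submodule.colon I ((irrelIdeal K ν ^ k : Ideal (MvPolynomial (Fin ν) K)) :
    Set (MvPolynomial (Fin ν) K))

/-- Saturation (colon) of `I` with respect to powers of the variable `X_v`. -/
noncomputable def satVar {K : Type*} [CommRing K] {ν : ℕ}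
    (I : Ideal (MvPolynomial (Fin ν) K)) (v : Fin ν) : Ideal (MvPolynomial (Fin ν) K) :=
  ⨆ k : ℕ, Submodule.colon I (Ideal.span {(X v : MvPolynomial (Fin ν) K) ^ k})

/-- The linear change of coordinates by the matrix `g`: `X_j ↦ Σ_i g_{ij} X_i`. -/
noncomputable def actMat (K : Type*) [CommRing K] {ν : ℕ}
    (g : Matrix (Fin ν) (Fin ν) K) :
    MvPolynomial (Fin ν) K →ₐ[K] MvPolynomial (Fin ν) K :=
  aeval fun j => ∑ i, C (g i j) * X i

/-- `g` is unipotent upper triangular. -/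
def IsUnipotent {K : Type*} [CommRing K] {ν : ℕ} (g : Matrix (Fin ν) (Fin ν) K) : Prop :=
  (∀ i j : Fin ν, j < i → g i j = 0) ∧ ∀ i, g i i = 1

/-- `J` is the generic initial ideal of `I` w.r.t. the order `lt`: there is a nonzero
polynomial `h` in the matrix entries such that `in(g(I)) = J` for every invertible `g`
with `h(g) ≠ 0` (a dense Zariski-open set of coordinate changes). -/
noncomputable def IsGin {K : Type*} [CommRing K] {ν : ℕ}
    (lt : (Fin ν → ℕ) → (Fin ν → ℕ) → Prop)
    (I J : Ideal (MvPolynomial (Fin ν) K)) : Prop :=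
  ∃ h : MvPolynomial (Fin ν × Fin ν) K, h ≠ 0 ∧
    ∀ g : Matrix (Fin ν) (Fin ν) K, IsUnit g.det →
      MvPolynomial.eval (fun p => g p.1 p.2) h ≠ 0 →
      initialIdeal lt (Ideal.map (actMat K g) I) = J

/-- `I` is a homogeneous ideal. -/
def IsHomog {K : Type*} [CommSemiring K] {ν : ℕ}
    (I : Ideal (MvPolynomial (Fin ν) K)) : Prop :=
  ∀ f ∈ I, ∀ d : ℕ, homogeneousComponent d f ∈ I

/-- `c + ρ`, as a vector of natural numbers. -/
def shiftVec {ν : ℕ} (ρ : Fin ν → ℤ) (c : Fin ν → ℕ) : Fin ν → ℕ :=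
  fun i => ((c i : ℤ) + ρ i).toNat

/-- The set `C + ρ`. -/
def shiftSet {ν : ℕ} (C : Set (Fin ν → ℕ)) (ρ : Fin ν → ℤ) : Set (Fin ν → ℕ) :=
  {x | ∃ c ∈ C, ∀ i, (x i : ℤ) = (c i : ℤ) + ρ i}

/-- A Borel set: upwards closed under the Borel order. -/
def IsBorelSet {ν : ℕ} (B : Set (Fin ν → ℕ)) : Prop :=
  ∀ a b : Fin ν → ℕ, BorelGE a b → b ∈ B → a ∈ B

/-- `(A, C, ρ)` is a binomial system of degree `d` in `ν` indeterminates. -/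
def IsBinomialSystem {ν : ℕ} (d : ℕ) (A C : Set (Fin ν → ℕ)) (ρ : Fin ν → ℤ) : Prop :=
  (∀ a ∈ A, ∑ i, a i = d) ∧ (∀ c ∈ C, ∑ i, c i = d) ∧
  (∀ c ∈ C, ∀ i, 0 ≤ (c i : ℤ) + ρ i) ∧ (∀ c ∈ C, (∑ i, ((c i : ℤ) + ρ i)) = (d : ℤ)) ∧
  A ∩ C = ∅ ∧ A ∩ shiftSet C ρ = ∅ ∧ C ∩ shiftSet C ρ = ∅ ∧
  IsBorelSet (A ∪ C) ∧ IsBorelSet (A ∪ shiftSet C ρ)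

/-- The ideal `F(A,C,ρ)`, generated by the monomials `X^a` (`a ∈ A`) and the binomials
`X^c - X^{c+ρ}` (`c ∈ C`). -/
noncomputable def Fideal (K : Type*) [CommRing K] {ν : ℕ}
    (A C : Set (Fin ν → ℕ)) (ρ : Fin ν → ℤ) : Ideal (MvPolynomial (Fin ν) K) :=
  Ideal.span ((fun a => mono K a) '' A ∪ (fun c => mono K c - mono K (shiftVec ρ c)) '' C)

/-- Restriction `A_i` of a set of exponent vectors to the first `i` indeterminates:
`A_i = {x : x extended by zeros lies in A}`. -/
def restrSet {ν : ℕ} (i : ℕ) (A : Set (Fin ν → ℕ)) : Set (Fin i → ℕ) :=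
  {x | (fun j : Fin ν => if hj : (j : ℕ) < i then x ⟨j, hj⟩ else 0) ∈ A}

/-- The inclusion `K[X_1,…,X_i] → K[X_1,…,X_ν]`. -/
noncomputable def inclAlg (K : Type*) [CommSemiring K] {i ν : ℕ} (h : i ≤ ν) :
    MvPolynomial (Fin i) K →ₐ[K] MvPolynomial (Fin ν) K :=
  rename (Fin.castLE h)

/-- Dimension of a module: Krull dimension of `R` modulo the annihilator. -/
noncomputable def moduleDim (R M : Type*) [CommRing R] [AddCommGroup M] [Module R M] :
    WithBot (WithTop ℕ) :=
  ringKrullDim (R ⧸ Module.annihilator R M)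

/-- `M` is a Cohen-Macaulay module of dimension `t` (relative to the ideal `I`):
its dimension is `t` and there is a regular sequence on `M` of length `t` inside `I`. -/
def IsCMofDim {R : Type*} [CommRing R] (I : Ideal R) (M : Type*)
    [AddCommGroup M] [Module R M] (t : ℕ) : Prop :=
  moduleDim R M = (t : WithBot (WithTop ℕ)) ∧
    ∃ rs : List R, rs.length = t ∧ (∀ r ∈ rs, r ∈ I) ∧ RingTheory.Sequence.IsRegular M rs

/-- The quotient module `J / J'` of an ideal by a subideal. -/
noncomputable def idealQuot {R : Type*} [CommRing R] (J J' : Ideal R) :=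
  J ⧸ (Submodule.comap (Submodule.subtype J) (J' : Submodule R R))

noncomputable instance idealQuotAddCommGroup {R : Type*} [CommRing R] (J J' : Ideal R) :
    AddCommGroup (idealQuot J J') := by unfold idealQuot; infer_instance

noncomputable instance idealQuotModule {R : Type*} [CommRing R] (J J' : Ideal R) :
    Module R (idealQuot J J') := by unfold idealQuot; infer_instance

/-- A homogeneous ideal `𝔞` is sequentially Cohen-Macaulay: there is a finite strictly
increasing filtration `𝔞 = J_0 ⊊ J_1 ⊊ ⋯ ⊊ J_r = S` by homogeneous ideals such that each
quotient `J_{i+1}/J_i` is Cohen-Macaulay and the dimensions strictly increase. -/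
noncomputable def IsSeqCM {K : Type*} [CommRing K] {ν : ℕ}
    (I : Ideal (MvPolynomial (Fin ν) K)) : Prop :=
  ∃ (r : ℕ) (J : Fin (r + 1) → Ideal (MvPolynomial (Fin ν) K)) (t : Fin r → ℕ),
    J 0 = I ∧ J (Fin.last r) = ⊤ ∧ (∀ i, IsHomog (J i)) ∧
    (∀ i : Fin r, J i.castSucc < J i.succ) ∧
    (∀ i : Fin r, IsCMofDim (irrelIdeal K ν) (idealQuot (J i.succ) (J i.castSucc)) (t i)) ∧
    StrictMono t


/-- `μ_M`: the product over the columns of `M` of the multinomial coefficients of the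
column entries. -/
def muM {ν : ℕ} (M : Matrix (Fin ν) (Fin ν) ℕ) : ℕ :=
  ∏ j, Nat.multinomial Finset.univ (fun i => M i j)

/-- `M + ρ`: add `ρ_j` to the `j`-th diagonal entry of `M` (as a matrix of naturals). -/
def addDiag {ν : ℕ} (M : Matrix (Fin ν) (Fin ν) ℕ) (ρ : Fin ν → ℤ) :
    Matrix (Fin ν) (Fin ν) ℕ :=
  fun i j => if i = j then ((M i j : ℤ) + ρ i).toNat else M i j

/-- `I` is a monomial ideal. -/
def IsMonomialIdeal {K : Type*} [CommSemiring K] {ν : ℕ}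
    (I : Ideal (MvPolynomial (Fin ν) K)) : Prop :=
  ∀ f ∈ I, ∀ m ∈ f.support, monomial m (1 : K) ∈ I

/-- Borel property of a monomial ideal: if `X^m ∈ I` and `X_j` divides `X^m`, then
`(X_i/X_j)·X^m ∈ I` for all `i ≤ j`. -/
def IsBorelIdeal {K : Type*} [CommSemiring K] {ν : ℕ}
    (I : Ideal (MvPolynomial (Fin ν) K)) : Prop :=
  ∀ m : Fin ν →₀ ℕ, monomial m (1 : K) ∈ I → ∀ i j : Fin ν, i ≤ j → m j ≠ 0 →
    monomial (m + Finsupp.single i 1 - Finsupp.single j 1) (1 : K) ∈ I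

/-!
Reduce monomials modulo `F(A, C, ρ)`: `X^m ↦ 0` if `m` is a multiple of an element of `A`,
`X^m ↦ reduce X^(m + ρ)` if it is a multiple of an element of `C`, and `X^m ↦ X^m` otherwise.
As the last nonzero entry of `ρ` is positive, `m + ρ <_rlex m`, so the recursion terminates.
The linear extension of this reduction kills `F(A, C, ρ)`: multiples of `X^a` by definition, and
multiples of `X^c - X^(c + ρ)` because, by the Borel property of `A ∪ (C + ρ)`, a multiple of
elements of both `A` and `C` is still a multiple of an element of `A` after the move by `ρ`.
Since the reduction fixes standard monomials and only lowers the others, the leading monomial of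
a nonzero element of `F(A, C, ρ)` is never standard, i.e. lies in `(X^(A ∪ C))`; the leading
monomials of the generators give the other inclusion.
-/

section PrefixSum

variable {n : ℕ}

def prefixSum {M : Type*} [AddCommMonoid M] (v : Fin n → M) (k : ℕ) : M :=
  ∑ j ∈ Finset.range k, if h : j < n then v ⟨j, h⟩ else 0

section AddCommMonoid

variable {M : Type*} [AddCommMonoid M]

@[simp]
theorem prefixSum_zero (v : Fin n → M) : prefixSum v 0 = 0 := rfl

theorem prefixSum_succ (v : Fin n → M) (k : ℕ) :
    prefixSum v (k + 1) = prefixSum v k + if h : k < n then v ⟨k, h⟩ else 0 :=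
  Finset.sum_range_succ _ k

theorem prefixSum_succ_val (v : Fin n → M) (i : Fin n) :
    prefixSum v (i + 1) = prefixSum v i + v i := by
  simp [prefixSum_succ]

theorem prefixSum_of_le (v : Fin n → M) {k : ℕ} (hk : n ≤ k) : prefixSum v k = ∑ i, v i := by
  induction k, hk using Nat.le_induction with
  | base =>
    rw [prefixSum, ← Fin.sum_univ_eq_sum_range (fun j => if h : j < n then v ⟨j, h⟩ else 0)]
    simp
  | succ k hk ih => rw [prefixSum_succ, dif_neg (by omega), add_zero, ih]

theorem prefixSum_add (v w : Fin n → M) (k : ℕ) :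
    prefixSum (v + w) k = prefixSum v k + prefixSum w k := by
  rw [prefixSum, prefixSum, prefixSum, ← Finset.sum_add_distrib]
  refine Finset.sum_congr rfl fun j _ => ?_
  split_ifs <;> simp

theorem map_prefixSum {N : Type*} [AddCommMonoid N] (f : M →+ N) (v : Fin n → M) (k : ℕ) :
    f (prefixSum v k) = prefixSum (f ∘ v) k := by
  rw [prefixSum, prefixSum, map_sum]
  refine Finset.sum_congr rfl fun j _ => ?_
  split_ifs <;> simp

end AddCommMonoid

theorem natCast_prefixSum (v : Fin n → ℕ) (k : ℕ) :
    ((prefixSum v k : ℕ) : ℤ) = prefixSum (fun i => (v i : ℤ)) k :=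
  map_prefixSum (Nat.castAddMonoidHom ℤ) v k

theorem prefixSum_mono (v : Fin n → ℕ) : Monotone (prefixSum v) := fun _ _ hkl =>
  Finset.sum_le_sum_of_subset (Finset.range_mono hkl)

theorem prefixSum_le_prefixSum {v w : Fin n → ℕ} (h : v ≤ w) (k : ℕ) :
    prefixSum v k ≤ prefixSum w k :=
  Finset.sum_le_sum fun j _ => by split_ifs <;> simp [h _]

theorem prefixSum_le_sum (v : Fin n → ℕ) (k : ℕ) : prefixSum v k ≤ ∑ i, v i := by
  rw [← prefixSum_of_le v (le_max_right k n)]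
  exact prefixSum_mono v (le_max_left k n)

theorem prefixSum_eq_sum_of_forall_eq_zero {v : Fin n → ℤ} {k : ℕ}
    (hv : ∀ i : Fin n, k ≤ i → v i = 0) : prefixSum v k = ∑ i, v i := by
  rw [← prefixSum_of_le v (le_max_right k n)]
  induction max k n, le_max_left k n using Nat.le_induction with
  | base => rfl
  | succ l hl ih =>
    rw [ih, prefixSum_succ]
    split_ifs with h
    · rw [hv ⟨l, h⟩ hl, add_zero]
    · rw [add_zero]

theorem borelGE_of_prefixSum_le {x y : Fin n → ℕ} (h : ∀ k, prefixSum y k ≤ prefixSum x k)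
    (hdeg : ∑ i, x i = ∑ i, y i) : BorelGE x y := by
  refine ⟨fun j => prefixSum x j - prefixSum y j, rfl, fun j hj => ?_, fun i => ?_⟩
  · dsimp only
    rw [prefixSum_of_le x hj, prefixSum_of_le y hj, hdeg, Nat.sub_self]
  · have hi := h i
    have hi' := h (i + 1)
    have hx := prefixSum_succ_val x i
    have hy := prefixSum_succ_val y i
    dsimp only
    omega

end PrefixSum

section Truncate

variable {n : ℕ}

/-- The first `d` units of `v`, read from the first coordinate on. -/
def truncate (v : Fin n → ℕ) (d : ℕ) : Fin n → ℕ :=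
  fun i => min (prefixSum v (i + 1)) d - min (prefixSum v i) d

theorem prefixSum_truncate (v : Fin n → ℕ) (d k : ℕ) :
    prefixSum (truncate v d) k = min (prefixSum v k) d := by
  induction k with
  | zero => simp
  | succ k ih =>
    have hmono := prefixSum_mono v (Nat.le_add_right k 1)
    rw [prefixSum_succ, ih]
    split_ifs with h
    · simp only [truncate]
      omega
    · rw [add_zero, prefixSum_succ v, dif_neg h, add_zero]

theorem sum_truncate (v : Fin n → ℕ) (d : ℕ) : ∑ i, truncate v d i = min (∑ i, v i) d := by
  rw [← prefixSum_of_le _ le_rfl, prefixSum_truncate, prefixSum_of_le _ le_rfl]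

theorem truncate_le (v : Fin n → ℕ) (d : ℕ) : truncate v d ≤ v := fun i => by
  have := prefixSum_succ_val v i
  simp only [truncate]
  omega

theorem truncate_eq_zero {v : Fin n → ℕ} {d : ℕ} {i : Fin n} (h : d ≤ prefixSum v i) :
    truncate v d i = 0 := by
  have := prefixSum_mono v (Nat.le_add_right i 1)
  simp only [truncate]
  omega

theorem borelGE_truncate {v b : Fin n → ℕ} {d : ℕ} (hbv : b ≤ v) (hb : ∑ i, b i = d)
    (hv : d ≤ ∑ i, v i) : BorelGE (truncate v d) b := by
  refine borelGE_of_prefixSum_le (fun k => ?_) (by rw [sum_truncate, hb, min_eq_right hv])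
  rw [prefixSum_truncate]
  exact le_min (prefixSum_le_prefixSum hbv k) (hb ▸ prefixSum_le_sum b k)

end Truncate

section Rlex

variable {n : ℕ}

theorem rlexLT_irrefl (a : Fin n → ℕ) : ¬ rlexLT a a := by
  rintro (h | ⟨-, k, hk, -⟩) <;> omega

theorem rlexLT_trans {a b c : Fin n → ℕ} (hab : rlexLT a b) (hbc : rlexLT b c) :
    rlexLT a c := by
  rcases hab with hab | ⟨hab, k, hk, hka⟩ <;> rcases hbc with hbc | ⟨hbc, l, hl, hlb⟩
  · exact Or.inl (hab.trans hbc)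
  · exact Or.inl (hbc ▸ hab)
  · exact Or.inl (hab ▸ hbc)
  · refine Or.inr ⟨hab.trans hbc, max k l, ?_, fun j hj => ?_⟩
    · rcases lt_trichotomy k l with h | rfl | h
      · rw [max_eq_right h.le, hka l h]; exact hl
      · rw [max_self]; exact hl.trans hk
      · rw [max_eq_left h.le, ← hlb k h]; exact hk
    · rw [hka j (lt_of_le_of_lt (le_max_left k l) hj), hlb j (lt_of_le_of_lt (le_max_right k l) hj)]

theorem rlexLT_asymm {a b : Fin n → ℕ} (hab : rlexLT a b) : ¬ rlexLT b a :=
  fun hba => rlexLT_irrefl a (rlexLT_trans hab hba)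

theorem finite_setOf_rlexLT (b : Fin n → ℕ) : {a | rlexLT a b}.Finite := by
  refine (Set.finite_Iic fun _ => ∑ i, b i).subset fun a hab i => ?_
  have hdeg : ∑ i, a i ≤ ∑ i, b i := by rcases hab with h | ⟨h, -⟩ <;> omega
  exact (Finset.single_le_sum (fun j _ => Nat.zero_le (a j)) (Finset.mem_univ i)).trans hdeg

noncomputable def rlexRank (b : Fin n → ℕ) : ℕ := {a | rlexLT a b}.ncard

theorem rlexRank_lt {a b : Fin n → ℕ} (hab : rlexLT a b) : rlexRank a < rlexRank b :=
  Set.ncard_lt_ncard ⟨fun _ hc => rlexLT_trans hc hab, fun h => rlexLT_irrefl a (h hab)⟩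
    (finite_setOf_rlexLT b)

theorem natCast_shiftVec {ρ : Fin n → ℤ} {m : Fin n → ℕ} {i : Fin n} (h : 0 ≤ (m i : ℤ) + ρ i) :
    (shiftVec ρ m i : ℤ) = m i + ρ i :=
  Int.toNat_of_nonneg h

theorem sum_shiftVec {ρ : Fin n → ℤ} {m : Fin n → ℕ} (h : ∀ i, 0 ≤ (m i : ℤ) + ρ i)
    (hρ : ∑ i, ρ i = 0) : ∑ i, shiftVec ρ m i = ∑ i, m i := by
  have : (∑ i, shiftVec ρ m i : ℤ) = ∑ i, (m i : ℤ) + ∑ i, ρ i := by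
    rw [← Finset.sum_add_distrib]
    exact Finset.sum_congr rfl fun i _ => natCast_shiftVec (h i)
  rw [hρ, add_zero] at this
  exact_mod_cast this

theorem rlexLT_shiftVec {ρ : Fin n → ℤ} {m : Fin n → ℕ} (h : ∀ i, 0 ≤ (m i : ℤ) + ρ i)
    (hρ : ∑ i, ρ i = 0) {k : Fin n} (hk : 0 < ρ k) (hlast : ∀ j, k < j → ρ j = 0) :
    rlexLT (shiftVec ρ m) m := by
  refine Or.inr ⟨sum_shiftVec h hρ, k, ?_, fun j hj => ?_⟩
  · have := natCast_shiftVec (h k)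
    omega
  · have := natCast_shiftVec (h j)
    have := hlast j hj
    omega

end Rlex

section BinomialSystem

variable {n d : ℕ} {A C : Set (Fin n → ℕ)} {ρ : Fin n → ℤ}

theorem exists_last_pos_of_mPos (hm : mPos ρ) : ∃ k, 0 < ρ k ∧ ∀ j, k < j → ρ j = 0 := by
  obtain ⟨k, hk, hpos⟩ := hm
  refine ⟨k, hpos, fun j hkj => by_contra fun hj => ?_⟩
  have hle : (j : ℕ) + 1 ≤ mIdx ρ :=
    (Finset.le_sup (f := fun i : Fin n => (i : ℕ) + 1) (by simpa using hj)).trans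
      (le_max_right _ _)
  omega

theorem shiftVec_add {c : Fin n → ℕ} (hc : ∀ i, 0 ≤ (c i : ℤ) + ρ i) (u : Fin n → ℕ) :
    shiftVec ρ (u + c) = u + shiftVec ρ c := by
  funext i
  have := natCast_shiftVec (hc i)
  simp only [shiftVec, Pi.add_apply] at this ⊢
  omega

theorem IsBinomialSystem.sum_eq_zero (hB : IsBinomialSystem d A C ρ) {c : Fin n → ℕ}
    (hc : c ∈ C) : ∑ i, ρ i = 0 := by
  have hdeg := hB.2.2.2.1 c hc
  rw [Finset.sum_add_distrib, ← Nat.cast_sum, hB.2.1 c hc] at hdeg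
  omega

theorem IsBinomialSystem.add_nonneg (hB : IsBinomialSystem d A C ρ) {c m : Fin n → ℕ}
    (hc : c ∈ C) (hcm : c ≤ m) (i : Fin n) : 0 ≤ (m i : ℤ) + ρ i := by
  have := hB.2.2.1 c hc i
  have : c i ≤ m i := hcm i
  omega

theorem IsBinomialSystem.rlexLT_shiftVec_of_le (hB : IsBinomialSystem d A C ρ) {k : Fin n}
    (hk : 0 < ρ k) (hlast : ∀ j, k < j → ρ j = 0) {c m : Fin n → ℕ} (hc : c ∈ C)
    (hcm : c ≤ m) : rlexLT (shiftVec ρ m) m :=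
  rlexLT_shiftVec (hB.add_nonneg hc hcm) (hB.sum_eq_zero hc) hk hlast

/-- Up to the last nonzero entry `k` of `ρ` the prefix sums of `m + ρ` stay below `d` (the
truncation is positive at `k`), so there `c₁` has the prefix sums of `m`; beyond `k` those of
`ρ` vanish and `c₁` has the prefix sums of the truncation of `m`. -/
theorem borelGE_of_truncate_eq_shift {m a c₁ : Fin n → ℕ} {k : Fin n} (hk : 0 < ρ k)
    (hlast : ∀ j, k < j → ρ j = 0) (hρ : ∑ i, ρ i = 0) (hm : ∀ i, 0 ≤ (m i : ℤ) + ρ i)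
    (ham : a ≤ m) (ha : ∑ i, a i = d) (hc₁ : ∑ i, c₁ i = d)
    (htrunc : ∀ i, (truncate (shiftVec ρ m) d i : ℤ) = c₁ i + ρ i) : BorelGE c₁ a := by
  set v := shiftVec ρ m
  have hPv : ∀ l, ((prefixSum v l : ℕ) : ℤ) = ((prefixSum m l : ℕ) : ℤ) + prefixSum ρ l := by
    intro l
    simp only [natCast_prefixSum]
    rw [← prefixSum_add]
    exact congrArg (prefixSum · l) (funext fun i => natCast_shiftVec (hm i))
  have hPc₁ : ∀ l,
      ((min (prefixSum v l) d : ℕ) : ℤ) = ((prefixSum c₁ l : ℕ) : ℤ) + prefixSum ρ l := by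
    intro l
    rw [← prefixSum_truncate]
    simp only [natCast_prefixSum]
    rw [← prefixSum_add]
    exact congrArg (prefixSum · l) (funext htrunc)
  have hvk : prefixSum v k < d := by
    by_contra! hvk
    have := htrunc k
    rw [truncate_eq_zero hvk] at this
    omega
  refine borelGE_of_prefixSum_le (fun l => ?_) (hc₁.trans ha.symm)
  have hal : prefixSum a l ≤ min (prefixSum m l) d :=
    le_min (prefixSum_le_prefixSum ham l) (ha ▸ prefixSum_le_sum a l)
  have := hPv l
  have := hPc₁ l
  rcases le_or_gt l k with hl | hl
  · have := prefixSum_mono v hl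
    omega
  · have : prefixSum ρ l = 0 :=
      (prefixSum_eq_sum_of_forall_eq_zero fun i hi => hlast i (by omega)).trans hρ
    omega

/-- The truncation of `m + ρ` to degree `d` lies Borel-above `c + ρ`, hence in `A ∪ (C + ρ)`.
It is not some `c₁ + ρ`: then `c₁ ≥_Bor a` would put `c₁ ∈ C` into `A ∪ (C + ρ)`. -/
theorem IsBinomialSystem.exists_le_shiftVec (hB : IsBinomialSystem d A C ρ) {k : Fin n}
    (hk : 0 < ρ k) (hlast : ∀ j, k < j → ρ j = 0) {a c m : Fin n → ℕ} (ha : a ∈ A)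
    (hc : c ∈ C) (ham : a ≤ m) (hcm : c ≤ m) : ∃ a' ∈ A, a' ≤ shiftVec ρ m := by
  have hρ := hB.sum_eq_zero hc
  have hm := hB.add_nonneg hc hcm
  obtain ⟨hAdeg, hCdeg, hCnn, -, hAC, -, hCC, -, hBorel⟩ := hB
  set v := shiftVec ρ m
  have hcv : shiftVec ρ c ≤ v := fun i => by
    show shiftVec ρ c i ≤ shiftVec ρ m i
    have := natCast_shiftVec (hCnn c hc i)
    have := natCast_shiftVec (hm i)
    have : c i ≤ m i := hcm i
    omega
  have hcρ : shiftVec ρ c ∈ shiftSet C ρ := ⟨c, hc, fun i => natCast_shiftVec (hCnn c hc i)⟩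
  have hdv : d ≤ ∑ i, v i := by
    rw [sum_shiftVec hm hρ, ← hCdeg c hc]
    exact Finset.sum_le_sum fun i _ => hcm i
  have hBor : BorelGE (truncate v d) (shiftVec ρ c) :=
    borelGE_truncate hcv (by rw [sum_shiftVec (hCnn c hc) hρ, hCdeg c hc]) hdv
  rcases hBorel _ _ hBor (Or.inr hcρ) with htA | ⟨c₁, hc₁, htrunc⟩
  · exact ⟨_, htA, truncate_le v d⟩
  · have hc₁a := borelGE_of_truncate_eq_shift hk hlast hρ hm ham (hAdeg a ha) (hCdeg c₁ hc₁)
      htrunc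
    rcases hBorel _ _ hc₁a (Or.inl ha) with h | h
    · exact absurd (Set.mem_inter h hc₁) (by simp [hAC])
    · exact absurd (Set.mem_inter hc₁ h) (by simp [hCC])

end BinomialSystem

theorem map_eq_zero_of_mem_span {σ R M : Type*} [CommSemiring R] [AddCommMonoid M]
    [Module R M] (L : MvPolynomial σ R →ₗ[R] M) {S : Set (MvPolynomial σ R)}
    (hS : ∀ g ∈ S, ∀ u, L (monomial u 1 * g) = 0) {f : MvPolynomial σ R}
    (hf : f ∈ Ideal.span S) : L f = 0 := by
  suffices ∀ q, L (q * f) = 0 by simpa using this 1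
  induction hf using Submodule.span_induction with
  | mem g hg =>
    intro q
    induction q using MvPolynomial.induction_on' with
    | monomial u r =>
      have hsmul : monomial u r * g = r • (monomial u 1 * g) := by
        rw [← smul_mul_assoc, smul_monomial, smul_eq_mul, mul_one]
      rw [hsmul, map_smul, hS g hg, smul_zero]
    | add p q hp hq => rw [add_mul, map_add, hp, hq, add_zero]
  | zero => simp
  | add x y _ _ hx hy => intro q; rw [mul_add, map_add, hx, hy, add_zero]
  | smul r x _ hx => intro q; rw [smul_eq_mul, ← mul_assoc]; exact hx (q * r)

section Reduction

variable {K : Type*} [CommRing K] {n : ℕ} {A C : Set (Fin n → ℕ)} {ρ : Fin n → ℤ}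

@[simp]
theorem coe_expF (a : Fin n → ℕ) : ⇑(expF a) = a :=
  Finsupp.equivFunOnFinite.apply_symm_apply a

@[simp]
theorem expF_coe (m : Fin n →₀ ℕ) : expF ⇑m = m :=
  Finsupp.equivFunOnFinite_symm_coe m

open Classical in
noncomputable def reduce (K : Type*) [CommRing K] (A C : Set (Fin n → ℕ)) (ρ : Fin n → ℤ)
    (hdesc : ∀ m, (∃ c ∈ C, c ≤ m) → rlexLT (shiftVec ρ m) m) (m : Fin n → ℕ) :
    MvPolynomial (Fin n) K :=
  if ∃ a ∈ A, a ≤ m then 0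
  else if _ : ∃ c ∈ C, c ≤ m then reduce K A C ρ hdesc (shiftVec ρ m)
  else mono K m
termination_by rlexRank m
decreasing_by exact rlexRank_lt (hdesc m ‹_›)

variable (hdesc : ∀ m, (∃ c ∈ C, c ≤ m) → rlexLT (shiftVec ρ m) m)

theorem reduce_of_exists_le {m : Fin n → ℕ} (hA : ∃ a ∈ A, a ≤ m) :
    reduce K A C ρ hdesc m = 0 := by
  rw [reduce, if_pos hA]

theorem reduce_of_not_exists_le {m : Fin n → ℕ} (hA : ¬ ∃ a ∈ A, a ≤ m)
    (hC : ¬ ∃ c ∈ C, c ≤ m) : reduce K A C ρ hdesc m = mono K m := by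
  rw [reduce, if_neg hA, dif_neg hC]

theorem reduce_shiftVec
    (hstay : ∀ m, (∃ a ∈ A, a ≤ m) → (∃ c ∈ C, c ≤ m) → ∃ a ∈ A, a ≤ shiftVec ρ m)
    {m : Fin n → ℕ} (hC : ∃ c ∈ C, c ≤ m) :
    reduce K A C ρ hdesc m = reduce K A C ρ hdesc (shiftVec ρ m) := by
  by_cases hA : ∃ a ∈ A, a ≤ m
  · rw [reduce_of_exists_le hdesc hA, reduce_of_exists_le hdesc (hstay m hA hC)]
  · rw [reduce, if_neg hA, dif_pos hC]

theorem support_reduce (m : Fin n → ℕ) :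
    ∀ w ∈ (reduce K A C ρ hdesc m).support, ⇑w = m ∨ rlexLT ⇑w m := by
  intro w hw
  rw [reduce] at hw
  split_ifs at hw with hA hC
  · simp at hw
  · have hlt := hdesc m hC
    rcases support_reduce (shiftVec ρ m) w hw with h | h
    · exact Or.inr (h ▸ hlt)
    · exact Or.inr (rlexLT_trans h hlt)
  · rw [Finset.mem_singleton.mp (support_monomial_subset hw), coe_expF]
    exact Or.inl rfl
termination_by rlexRank m
decreasing_by exact rlexRank_lt (hdesc m hC)

noncomputable def reduceLin (K : Type*) [CommRing K] (A C : Set (Fin n → ℕ)) (ρ : Fin n → ℤ)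
    (hdesc : ∀ m, (∃ c ∈ C, c ≤ m) → rlexLT (shiftVec ρ m) m) :
    MvPolynomial (Fin n) K →ₗ[K] MvPolynomial (Fin n) K :=
  (basisMonomials (Fin n) K).constr K fun u => reduce K A C ρ hdesc ⇑u

theorem reduceLin_monomial (u : Fin n →₀ ℕ) (r : K) :
    reduceLin K A C ρ hdesc (monomial u r) = r • reduce K A C ρ hdesc ⇑u := by
  have hbasis := (basisMonomials (Fin n) K).constr_basis K (fun u => reduce K A C ρ hdesc ⇑u) u
  rw [coe_basisMonomials] at hbasis
  have hr : monomial u r = r • monomial u (1 : K) := by rw [smul_monomial, smul_eq_mul, mul_one]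
  rw [hr, map_smul, reduceLin, hbasis]

theorem reduceLin_eq_zero
    (hstay : ∀ m, (∃ a ∈ A, a ≤ m) → (∃ c ∈ C, c ≤ m) → ∃ a ∈ A, a ≤ shiftVec ρ m)
    (hadd : ∀ c ∈ C, ∀ u, shiftVec ρ (u + c) = u + shiftVec ρ c)
    {f : MvPolynomial (Fin n) K} (hf : f ∈ Fideal K A C ρ) : reduceLin K A C ρ hdesc f = 0 := by
  refine map_eq_zero_of_mem_span _ ?_ hf
  rintro g (⟨a, ha, rfl⟩ | ⟨c, hc, rfl⟩) u <;> dsimp only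
  · rw [mono, monomial_mul, one_mul, reduceLin_monomial, Finsupp.coe_add, coe_expF,
      reduce_of_exists_le hdesc ⟨a, ha, le_add_self⟩, smul_zero]
  · rw [mul_sub, mono, mono, monomial_mul, monomial_mul, map_sub, reduceLin_monomial,
      reduceLin_monomial, Finsupp.coe_add, Finsupp.coe_add, coe_expF, coe_expF, ← hadd c hc,
      ← reduce_shiftVec hdesc hstay ⟨c, hc, le_add_self⟩, sub_self]

/-- `reduce` fixes standard monomials and only lowers the others. -/
theorem coeff_reduceLin_of_isLeadOf {f : MvPolynomial (Fin n) K} {l : Fin n →₀ ℕ}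
    (hl : IsLeadOf rlexLT f l) (hA : ¬ ∃ a ∈ A, a ≤ ⇑l) (hC : ¬ ∃ c ∈ C, c ≤ ⇑l) :
    coeff l (reduceLin K A C ρ hdesc f) = coeff l f := by
  conv_lhs => rw [f.as_sum, map_sum]
  simp only [reduceLin_monomial, coeff_sum, coeff_smul]
  rw [Finset.sum_eq_single l]
  · rw [reduce_of_not_exists_le hdesc hA hC, mono, expF_coe, coeff_monomial, if_pos rfl,
      smul_eq_mul, mul_one]
  · intro v hv hvl
    suffices l ∉ (reduce K A C ρ hdesc ⇑v).support by rw [notMem_support_iff.mp this, smul_zero]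
    intro hlv
    rcases support_reduce hdesc (⇑v) l hlv with h | h
    · exact hvl (DFunLike.coe_injective h).symm
    · exact rlexLT_asymm h (hl.2 v hv hvl)
  · exact fun h => absurd hl.1 h

theorem exists_le_of_isLeadOf (hdesc : ∀ m, (∃ c ∈ C, c ≤ m) → rlexLT (shiftVec ρ m) m)
    (hstay : ∀ m, (∃ a ∈ A, a ≤ m) → (∃ c ∈ C, c ≤ m) → ∃ a ∈ A, a ≤ shiftVec ρ m)
    (hadd : ∀ c ∈ C, ∀ u, shiftVec ρ (u + c) = u + shiftVec ρ c)
    {f : MvPolynomial (Fin n) K} (hf : f ∈ Fideal K A C ρ) {l : Fin n →₀ ℕ}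
    (hl : IsLeadOf rlexLT f l) : ∃ b ∈ A ∪ C, b ≤ ⇑l := by
  by_contra! hstd
  have hcoeff := coeff_reduceLin_of_isLeadOf hdesc hl (fun ⟨a, ha, hal⟩ => hstd a (.inl ha) hal)
    (fun ⟨c, hc, hcl⟩ => hstd c (.inr hc) hcl)
  rw [reduceLin_eq_zero hdesc hstay hadd hf, coeff_zero] at hcoeff
  exact mem_support_iff.mp hl.1 hcoeff.symm

end Reduction

section LeadingMonomials

variable {K : Type*} [CommRing K] {n : ℕ}

theorem ne_zero_of_isLeadOf {lt : (Fin n → ℕ) → (Fin n → ℕ) → Prop}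
    {f : MvPolynomial (Fin n) K} {m : Fin n →₀ ℕ} (h : IsLeadOf lt f m) : f ≠ 0 := by
  rintro rfl
  simpa using h.1

theorem isLeadOf_mono_iff [Nontrivial K] {lt : (Fin n → ℕ) → (Fin n → ℕ) → Prop}
    {b : Fin n → ℕ} {m : Fin n →₀ ℕ} : IsLeadOf lt (mono K b) m ↔ m = expF b := by
  classical
  rw [IsLeadOf, mono, support_monomial, if_neg one_ne_zero]
  simp +contextual

theorem isLeadOf_mono_sub_mono_iff [Nontrivial K] {b b' : Fin n → ℕ} (hlt : rlexLT b' b)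
    {m : Fin n →₀ ℕ} : IsLeadOf rlexLT (mono K b - mono K b') m ↔ m = expF b := by
  classical
  have hne : expF b' ≠ expF b := fun h =>
    rlexLT_irrefl b (by rwa [← coe_expF b', h, coe_expF] at hlt)
  have hsupp : ∀ w ∈ (mono K b - mono K b').support, w = expF b ∨ w = expF b' := fun w hw => by
    simpa [mono, eq_comm] using support_sub _ _ _ hw
  have hb : expF b ∈ (mono K b - mono K b').support := by
    simp [mono, coeff_monomial, hne]
  constructor
  · rintro ⟨hm, hlead⟩
    refine (hsupp m hm).resolve_right fun hm' => ?_
    subst hm'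
    exact rlexLT_asymm hlt (by simpa using hlead _ hb hne.symm)
  · rintro rfl
    refine ⟨hb, fun w hw hwb => ?_⟩
    rw [(hsupp w hw).resolve_left hwb]
    simpa using hlt

theorem leadingMonomials_generators [Nontrivial K] {A C : Set (Fin n → ℕ)} {ρ : Fin n → ℤ}
    (hdesc : ∀ c ∈ C, rlexLT (shiftVec ρ c) c) :
    {p | ∃ g ∈ (fun a => mono K a) '' A ∪ (fun c => mono K c - mono K (shiftVec ρ c)) '' C,
        g ≠ 0 ∧ ∃ m, IsLeadOf rlexLT g m ∧ p = monomial m (1 : K)} =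
      (fun a => mono K a) '' (A ∪ C) := by
  ext p
  constructor
  · rintro ⟨g, ⟨a, ha, rfl⟩ | ⟨c, hc, rfl⟩, -, m, hm, rfl⟩
    · exact ⟨a, .inl ha, by rw [isLeadOf_mono_iff.mp hm]; rfl⟩
    · exact ⟨c, .inr hc, by rw [(isLeadOf_mono_sub_mono_iff (hdesc c hc)).mp hm]; rfl⟩
  · rintro ⟨b, ha | hc, rfl⟩
    · have hlead : IsLeadOf rlexLT (mono K b) (expF b) := isLeadOf_mono_iff.mpr rfl
      exact ⟨_, .inl ⟨b, ha, rfl⟩, ne_zero_of_isLeadOf hlead, expF b, hlead, rfl⟩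
    · have hlead := (isLeadOf_mono_sub_mono_iff (K := K) (hdesc b hc)).mpr rfl
      exact ⟨_, .inr ⟨b, hc, rfl⟩, ne_zero_of_isLeadOf hlead, expF b, hlead, rfl⟩

theorem span_leadingMonomials_le_initialIdeal {lt : (Fin n → ℕ) → (Fin n → ℕ) → Prop}
    {G : Set (MvPolynomial (Fin n) K)} {I : Ideal (MvPolynomial (Fin n) K)} (hG : G ⊆ I) :
    Ideal.span {p | ∃ g ∈ G, g ≠ 0 ∧ ∃ m, IsLeadOf lt g m ∧ p = monomial m (1 : K)} ≤
      initialIdeal lt I :=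
  Ideal.span_mono fun _ ⟨g, hg, hg0, hlead⟩ => ⟨g, hG hg, hg0, hlead⟩

theorem monomial_mem_span_mono {B : Set (Fin n → ℕ)} {b : Fin n → ℕ} (hb : b ∈ B)
    {l : Fin n →₀ ℕ} (hbl : b ≤ ⇑l) :
    monomial l (1 : K) ∈ Ideal.span ((fun a => mono K a) '' B) := by
  have hl : l = (l - expF b) + expF b := by
    ext i
    simp [tsub_add_cancel_of_le (hbl i)]
  rw [hl, ← mul_one (1 : K), ← monomial_mul]
  exact Ideal.mul_mem_left _ _ (Ideal.subset_span ⟨b, hb, rfl⟩)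

end LeadingMonomials

/-- for a binomial system with `ρ_{m(ρ)} > 0`, the monomials `X^a` (`a ∈ A`)
together with the binomials `X^c - X^{c+ρ}` (`c ∈ C`) form a Gröbner basis of `F(A,C,ρ)`
w.r.t. the reverse lexicographic order; in particular `in_rlex F(A,C,ρ) = (X^{A∪C})`. -/
theorem stmt9 {K : Type*} [Field K] {n d : ℕ}
    (A C : Set (Fin n → ℕ)) (ρ : Fin n → ℤ)
    (hB : IsBinomialSystem d A C ρ) (hm : mPos ρ) :
    IsGroebnerBasis rlexLT
      ((fun a => mono K a) '' A ∪ (fun c => mono K c - mono K (shiftVec ρ c)) '' C)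
      (Fideal K A C ρ) ∧
    initialIdeal rlexLT (Fideal K A C ρ) =
      Ideal.span ((fun a => mono K a) '' (A ∪ C)) := by
  obtain ⟨k, hk, hlast⟩ := exists_last_pos_of_mPos hm
  have hdesc : ∀ m, (∃ c ∈ C, c ≤ m) → rlexLT (shiftVec ρ m) m :=
    fun m ⟨c, hc, hcm⟩ => hB.rlexLT_shiftVec_of_le hk hlast hc hcm
  have hstay : ∀ m, (∃ a ∈ A, a ≤ m) → (∃ c ∈ C, c ≤ m) → ∃ a ∈ A, a ≤ shiftVec ρ m :=
    fun m ⟨a, ha, ham⟩ ⟨c, hc, hcm⟩ => hB.exists_le_shiftVec hk hlast ha hc ham hcm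
  have hadd : ∀ c ∈ C, ∀ u, shiftVec ρ (u + c) = u + shiftVec ρ c :=
    fun c hc => shiftVec_add (hB.2.2.1 c hc)
  have hlead := leadingMonomials_generators (K := K) (A := A) fun c hc => hdesc c ⟨c, hc, le_rfl⟩
  have hinit :
      initialIdeal rlexLT (Fideal K A C ρ) = Ideal.span ((fun a => mono K a) '' (A ∪ C)) := by
    refine le_antisymm (Ideal.span_le.mpr ?_) ?_
    · rintro _ ⟨f, hf, -, l, hl, rfl⟩
      obtain ⟨b, hb, hbl⟩ := exists_le_of_isLeadOf hdesc hstay hadd hf hl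
      exact monomial_mem_span_mono hb hbl
    · rw [← hlead]
      exact span_leadingMonomials_le_initialIdeal Ideal.subset_span
  exact ⟨⟨fun g hg => Ideal.subset_span hg, hinit.trans (congrArg Ideal.span hlead).symm⟩, hinit⟩

end Fumasoli
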